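/- For integers n > 2k - t with k > 2t + 1, t ≥ 0 and q ≥ 3: θ_k + Σ_{j=0}^{k-t-2} [k-t+1 choose j+1]_q · q^{(k-t-j)(k-t-j-1)} · [n-k-1 choose k-t-j-1]_q > [n-t-2 choose k-t-2]_q · (1 + θ_{t+1}·q^{k-t-1}·(q^{n-k}-1)/(q^{k-t-1}-1)). -/

import Mathlib

/-- Gaussian binomial coefficient `[n choose k]_q` as a real number,
with the convention that it is `0` for `k < 0` (and for `k > n`). -/
noncomputable def gbin (q n : ℕ) (k : ℤ) : ℝ :=
  if 0 ≤ k then ∏ i ∈ Finset.range k.toNat, ((q:ℝ)^(n-i) - 1)/((q:ℝ)^(i+1) - 1) else 0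

/-- `θ_m = (q^{m+1}-1)/(q-1)`, the number of points of `PG(m,q)`. -/
noncomputable def theta (q m : ℕ) : ℝ := ((q:ℝ)^(m+1) - 1)/((q:ℝ) - 1)

/-!
Put `K = k - t - 2` and `M = n - k`, so `M ≥ K + 3` and `K ≥ t`. Since
`[K+M, K]_q (q^M - 1)/(q^(K+1) - 1) = [K+M, K+1]_q`, the left side equals
`[K+M, K]_q + θ_(t+1) q^(K+1) [K+M, K+1]_q`. For `q ≥ 3` one has
`q^(ab) ≤ [a+b, a]_q ≤ 2 q^(ab)` (the upper bound from `∏ (1 - q^(-i)) ≥ 1/2`), and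
`θ_(t+1) ≤ (3/2) q^(t+1)`, so the left side is at most `(3q+1) q^(KM+M+t)`. The summand
`j = 0` on the right alone is at least `(q^2+q+1) q^(KM+M+K)`, and `3q + 1 < q^2 + q + 1`.
-/

open Finset

lemma gbin_natCast (q N K : ℕ) :
    gbin q N K = ∏ i ∈ range K, ((q:ℝ)^(N-i) - 1)/((q:ℝ)^(i+1) - 1) := by
  simp [gbin]

lemma gbin_one (q N : ℕ) : gbin q N 1 = ((q:ℝ)^N - 1)/((q:ℝ) - 1) := by
  simpa using gbin_natCast q N 1

lemma gbin_succ (q N K : ℕ) :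
    gbin q N (K+1 : ℕ) = gbin q N K * (((q:ℝ)^(N-K) - 1)/((q:ℝ)^(K+1) - 1)) := by
  rw [gbin_natCast, gbin_natCast, prod_range_succ]

lemma gbin_nonneg {q : ℕ} (hq : 1 ≤ q) (N : ℕ) (z : ℤ) : 0 ≤ gbin q N z := by
  have hq' : (1:ℝ) ≤ q := by exact_mod_cast hq
  unfold gbin
  split_ifs
  · exact prod_nonneg fun i _ ↦ div_nonneg (sub_nonneg.2 (one_le_pow₀ hq'))
      (sub_nonneg.2 (one_le_pow₀ hq'))
  · exact le_rfl

lemma gbin_add_eq_prod (q K L : ℕ) :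
    gbin q (K+L) K = ∏ i ∈ range K, ((q:ℝ)^(L+(i+1)) - 1)/((q:ℝ)^(i+1) - 1) := by
  rw [gbin_natCast, prod_div_distrib, prod_div_distrib, ← prod_range_reflect _ K]
  congr 1
  refine prod_congr rfl fun i hi ↦ ?_
  rw [mem_range] at hi
  congr 2
  omega

lemma pow_le_gbin_add {q : ℕ} (hq : 2 ≤ q) (K L : ℕ) : (q:ℝ)^(K*L) ≤ gbin q (K+L) K := by
  have hq' : (2:ℝ) ≤ q := by exact_mod_cast hq
  rw [gbin_add_eq_prod, pow_mul', ← card_range K, ← prod_const, card_range]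
  refine prod_le_prod (fun _ _ ↦ by positivity) fun i _ ↦ ?_
  have hi : 1 < (q:ℝ)^(i+1) := one_lt_pow₀ (by linarith) (by omega)
  rw [le_div_iff₀ (by linarith), pow_add _ L]
  nlinarith [one_le_pow₀ (n := L) (by linarith : (1:ℝ) ≤ q)]

lemma half_le_prod_one_sub_pow {x : ℝ} (hx0 : 0 ≤ x) (hx : x ≤ 1/3) (K : ℕ) :
    1/2 ≤ ∏ i ∈ range K, (1 - x^(i+1)) := by
  suffices h : (1 + x^K)/2 ≤ ∏ i ∈ range K, (1 - x^(i+1)) by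
    linarith [pow_nonneg hx0 K]
  induction K with
  | zero => norm_num
  | succ K ih =>
    rw [prod_range_succ]
    have hxK1 : x^(K+1) ≤ 1/3 := (pow_le_of_le_one hx0 (by linarith) (by omega)).trans hx
    -- `(1 + x^K)(1 - x^(K+1)) - (1 + x^(K+1)) = x^K (1 - 2x - x^(K+1)) ≥ 0`
    calc (1 + x^(K+1))/2 ≤ (1 + x^K)/2 * (1 - x^(K+1)) := by
          rw [pow_succ] at hxK1 ⊢
          nlinarith [pow_nonneg hx0 K, mul_nonneg (pow_nonneg hx0 K) hx0]
      _ ≤ _ := mul_le_mul_of_nonneg_right ih (by linarith)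

lemma gbin_add_le {q : ℕ} (hq : 3 ≤ q) (K L : ℕ) : gbin q (K+L) K ≤ 2 * (q:ℝ)^(K*L) := by
  have hq' : (3:ℝ) ≤ q := by exact_mod_cast hq
  have hx0 : (0:ℝ) ≤ (q:ℝ)⁻¹ := by positivity
  have hx : (q:ℝ)⁻¹ ≤ 1/3 := by rw [inv_le_comm₀ (by positivity) (by norm_num)]; norm_num [hq']
  have hfactor : ∀ i ∈ range K, ((q:ℝ)^(L+(i+1)) - 1)/((q:ℝ)^(i+1) - 1)
      ≤ (q:ℝ)^L / (1 - (q:ℝ)⁻¹^(i+1)) := by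
    intro i _
    have hy : 1 < (q:ℝ)^(i+1) := one_lt_pow₀ (by linarith) (by omega)
    have hrhs : (q:ℝ)^L / (1 - (q:ℝ)⁻¹^(i+1)) = (q:ℝ)^(L+(i+1)) / ((q:ℝ)^(i+1) - 1) := by
      rw [inv_pow, pow_add]
      field_simp
      ring
    rw [hrhs]
    exact div_le_div_of_nonneg_right (by linarith) (by linarith)
  have hprod := half_le_prod_one_sub_pow hx0 hx K
  calc gbin q (K+L) K ≤ ∏ i ∈ range K, (q:ℝ)^L / (1 - (q:ℝ)⁻¹^(i+1)) := by
        rw [gbin_add_eq_prod]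
        refine prod_le_prod (fun i _ ↦ div_nonneg ?_ ?_) hfactor <;>
          linarith [one_le_pow₀ (n := L+(i+1)) (by linarith : (1:ℝ) ≤ q),
            one_le_pow₀ (n := i+1) (by linarith : (1:ℝ) ≤ q)]
    _ = (q:ℝ)^(K*L) / ∏ i ∈ range K, (1 - (q:ℝ)⁻¹^(i+1)) := by
        rw [prod_div_distrib, prod_const, card_range, pow_mul']
    _ ≤ 2 * (q:ℝ)^(K*L) := by
        rw [div_le_iff₀ (by linarith)]
        nlinarith [pow_nonneg (by linarith : (0:ℝ) ≤ q) (K*L)]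

lemma theta_nonneg {q : ℕ} (hq : 1 ≤ q) (m : ℕ) : 0 ≤ theta q m := by
  have hq' : (1:ℝ) ≤ q := by exact_mod_cast hq
  exact div_nonneg (sub_nonneg.2 (one_le_pow₀ hq')) (sub_nonneg.2 hq')

lemma theta_le {q : ℕ} (hq : 3 ≤ q) (m : ℕ) : theta q m ≤ 3/2 * (q:ℝ)^m := by
  have hq' : (3:ℝ) ≤ q := by exact_mod_cast hq
  rw [theta, div_le_iff₀ (by linarith), pow_succ]
  nlinarith [pow_nonneg (by linarith : (0:ℝ) ≤ q) m]

lemma le_gbin_one {q : ℕ} (hq : 2 ≤ q) (K : ℕ) :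
    ((q:ℝ)^2 + q + 1) * (q:ℝ)^K ≤ gbin q (K+3) 1 := by
  have hq' : (2:ℝ) ≤ q := by exact_mod_cast hq
  rw [gbin_one, le_div_iff₀ (by linarith), pow_add]
  nlinarith [one_le_pow₀ (n := K) (by linarith : (1:ℝ) ≤ q)]

lemma gbin_mul_one_add_theta_le {q : ℕ} (hq : 3 ≤ q) (t K : ℕ) {M : ℕ} (hM : 1 ≤ M) :
    gbin q (K+M) K * (1 + theta q (t+1) * (q:ℝ)^(K+1) * (((q:ℝ)^M - 1)/((q:ℝ)^(K+1) - 1)))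
      ≤ (3*q+1) * (q:ℝ)^(K*M+M+t) := by
  have hq' : (3:ℝ) ≤ q := by exact_mod_cast hq
  obtain ⟨L, rfl⟩ : ∃ L, M = L + 1 := ⟨M - 1, by omega⟩
  have hsplit : gbin q (K+(L+1)) K * (1 + theta q (t+1) * (q:ℝ)^(K+1) *
        (((q:ℝ)^(L+1) - 1)/((q:ℝ)^(K+1) - 1)))
      = gbin q (K+(L+1)) K + theta q (t+1) * (q:ℝ)^(K+1) * gbin q ((K+1)+L) (K+1 : ℕ) := by
    rw [show K+1+L = K+(L+1) by ring, gbin_succ, show K+(L+1)-K = L+1 by omega]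
    ring
  have h1 := gbin_add_le hq K (L+1)
  have h2 := gbin_add_le hq (K+1) L
  have h3 := theta_le hq (t+1)
  have h4 : (2:ℝ) ≤ q^(L+1+t) := by
    linarith [le_self_pow₀ (by linarith : (1:ℝ) ≤ q) (by omega : L+1+t ≠ 0)]
  have e1 : (q:ℝ)^(K*(L+1)+(L+1)+t) = (q:ℝ)^(K*(L+1)) * (q:ℝ)^(L+1+t) := by
    rw [← pow_add]; ring_nf
  have e2 : (q:ℝ)^(t+1) * (q:ℝ)^(K+1) * (q:ℝ)^((K+1)*L)
      = q * (q:ℝ)^(K*(L+1)+(L+1)+t) := by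
    rw [← pow_add, ← pow_add, ← pow_succ']; ring_nf
  have hθ := theta_nonneg (by omega : 1 ≤ q) (t+1)
  have hG := gbin_nonneg (by omega : 1 ≤ q) (K+1+L) (K+1 : ℕ)
  rw [hsplit]
  calc gbin q (K+(L+1)) K + theta q (t+1) * (q:ℝ)^(K+1) * gbin q ((K+1)+L) (K+1 : ℕ)
      ≤ 2 * (q:ℝ)^(K*(L+1)) + 3/2 * (q:ℝ)^(t+1) * (q:ℝ)^(K+1) * (2 * (q:ℝ)^((K+1)*L)) := by
        gcongr
    _ ≤ (3*q+1) * (q:ℝ)^(K*(L+1)+(L+1)+t) := by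
        rw [show 3/2 * (q:ℝ)^(t+1) * (q:ℝ)^(K+1) * (2 * (q:ℝ)^((K+1)*L))
            = 3 * ((q:ℝ)^(t+1) * (q:ℝ)^(K+1) * (q:ℝ)^((K+1)*L)) by ring, e2, e1]
        nlinarith [pow_nonneg (by linarith : (0:ℝ) ≤ q) (K*(L+1))]

lemma le_gbin_mul_pow_mul_gbin {q : ℕ} (hq : 2 ≤ q) (K : ℕ) {M : ℕ} (hM : K+2 ≤ M) :
    ((q:ℝ)^2 + q + 1) * (q:ℝ)^(K*M+M+K)
      ≤ gbin q (K+3) 1 * (q:ℝ)^((K+2)*(K+1)) * gbin q (M-1) (K+1 : ℕ) := by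
  obtain ⟨L, rfl⟩ : ∃ L, M = K + 2 + L := ⟨M - (K+2), by omega⟩
  rw [show K+2+L-1 = (K+1)+L by omega]
  have h1 := le_gbin_one hq K
  have h2 := pow_le_gbin_add hq (K+1) L
  calc ((q:ℝ)^2 + q + 1) * (q:ℝ)^(K*(K+2+L)+(K+2+L)+K)
      = ((q:ℝ)^2 + q + 1) * (q:ℝ)^K * (q:ℝ)^((K+2)*(K+1)) * (q:ℝ)^((K+1)*L) := by
        rw [mul_assoc _ ((q:ℝ)^K), mul_assoc, ← pow_add, ← pow_add]; ring_nf
    _ ≤ _ := by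
        have := gbin_nonneg (by omega : 1 ≤ q) (K+3) 1
        gcongr

theorem stmt_9 (q n k t : ℕ) (hn : 2*k < n + t) (hk : 2*t + 1 < k) (hq : 3 ≤ q) :
    gbin q (n-t-2) ((k:ℤ)-t-2) *
        (1 + theta q (t+1) * (q:ℝ)^(k-t-1) * (((q:ℝ)^(n-k) - 1)/((q:ℝ)^(k-t-1) - 1)))
    < theta q k + ∑ j ∈ Finset.range (k-t-1),
        gbin q (k-t+1) ((j:ℤ)+1) * (q:ℝ)^((k-t-j)*(k-t-j-1)) *
          gbin q (n-k-1) ((k:ℤ)-t-j-1) := by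
  set K := k - t - 2
  set M := n - k
  have hq' : (3:ℝ) ≤ q := by exact_mod_cast hq
  have hq1 : 1 ≤ q := by omega
  rw [show n - t - 2 = K + M by omega, show (k:ℤ) - t - 2 = K by omega,
    show k - t - 1 = K + 1 by omega]
  calc _ ≤ (3*q+1) * (q:ℝ)^(K*M+M+t) := gbin_mul_one_add_theta_le hq t K (by omega)
    _ < ((q:ℝ)^2 + q + 1) * (q:ℝ)^(K*M+M+t) := by
        gcongr
        nlinarith
    _ ≤ ((q:ℝ)^2 + q + 1) * (q:ℝ)^(K*M+M+K) := by
        gcongr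
        · linarith
        · omega
    _ ≤ gbin q (K+3) 1 * (q:ℝ)^((K+2)*(K+1)) * gbin q (M-1) (K+1 : ℕ) :=
        le_gbin_mul_pow_mul_gbin (by omega) K (by omega)
    _ = gbin q (k-t+1) 1 * (q:ℝ)^((k-t)*(k-t-1)) * gbin q (n-k-1) ((k:ℤ)-t-1) := by
        rw [show k - t = K + 2 by omega]
        congr 3; omega
    _ ≤ ∑ j ∈ range (K+1), gbin q (k-t+1) ((j:ℤ)+1) * (q:ℝ)^((k-t-j)*(k-t-j-1)) *
          gbin q (n-k-1) ((k:ℤ)-t-j-1) := by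
        refine le_of_eq_of_le ?_ (single_le_sum (fun j _ ↦ ?_) (mem_range.2 K.succ_pos))
        · simp
        · exact mul_nonneg (mul_nonneg (gbin_nonneg hq1 _ _) (by positivity)) (gbin_nonneg hq1 _ _)
    _ ≤ _ := le_add_of_nonneg_left (theta_nonneg hq1 k)
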